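/- arXiv:2308.05424 — 6 statements merged into one kernel-verified Lean document; each statement's English description precedes it below -/
import Mathlib

section
/- Let B be a commutative domain over a field k and let δ : B → B[t] be an exponential map (i.e., a k-algebra homomorphism with ε₀∘δ = id and δ_s∘δ_t = δ_{s+t}). Then the ring of δ-invariants B^δ = {x ∈ B : δ(x) = x} is factorially closed in B: if x, y ∈ B are nonzero and xy ∈ B^δ, then x ∈ B^δ and y ∈ B^δ. -/
open Polynomial

variable (k : Type) [Field k] (B : Type) [CommRing B] [IsDomain B] [Algebra k B]

/-- An exponential map on a `k`-domain `B`. -/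
def IsExpMap (δ : B →ₐ[k] B[X]) : Prop :=
  (∀ b : B, (δ b).eval 0 = b) ∧
  (∀ b : B, (δ b).map δ.toRingHom = (δ b).eval₂ (C.comp C) (C X + X))

/-- The trivial exponential map property. -/
def IsTrivialExp (δ : B →ₐ[k] B[X]) : Prop := ∀ b : B, δ b = C b

/-- The ring of δ-invariants, as a subalgebra. -/
noncomputable def expInv (δ : B →ₐ[k] B[X]) : Subalgebra k B :=
  AlgHom.equalizer δ CAlgHom

/-- A local slice: an element of minimal positive δ-degree. -/
def IsLocalSlice (δ : B →ₐ[k] B[X]) (x : B) : Prop :=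
  0 < (δ x).degree ∧ ∀ y : B, 0 < (δ y).degree → (δ x).degree ≤ (δ y).degree

/-- A slice: a local slice whose top iterative derivative is a unit. -/
def IsSlice (δ : B →ₐ[k] B[X]) (x : B) : Prop :=
  IsLocalSlice k B δ x ∧ IsUnit ((δ x).coeff (δ x).natDegree)

/-- δ admits a slice. -/
def HasSlice (δ : B →ₐ[k] B[X]) : Prop := ∃ x : B, IsSlice k B δ x

/-- Makar-Limanov invariant. -/
noncomputable def ML : Subalgebra k B :=
  ⨅ δ ∈ {δ : B →ₐ[k] B[X] | IsExpMap k B δ}, expInv k B δ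

/-- Makar-Limanov–Freudenburg invariant. -/
noncomputable def MLstar : Subalgebra k B :=
  ⨅ δ ∈ {δ : B →ₐ[k] B[X] | IsExpMap k B δ ∧ HasSlice k B δ}, expInv k B δ

/-- Rigidity: every exponential map is trivial. -/
def IsRigid : Prop := ∀ δ : B →ₐ[k] B[X], IsExpMap k B δ → IsTrivialExp k B δ

/-- `B` has transcendence degree `n` over `k`. -/
def HasTrdeg (n : ℕ) : Prop := ∃ x : Fin n → B, IsTranscendenceBasis k x

theorem invariants_factorially_closed (δ : B →ₐ[k] B[X]) (hδ : IsExpMap k B δ)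
    (x y : B) (hx : x ≠ 0) (hy : y ≠ 0) (hxy : x * y ∈ expInv k B δ) :
    x ∈ expInv k B δ ∧ y ∈ expInv k B δ := by
  have hmem : δ (x * y) = C (x * y) := hxy
  have hprod : δ x * δ y = C (x * y) := by rw [← map_mul]; exact hmem
  have hδx : δ x ≠ 0 := fun h => hx (by rw [← hδ.1 x, h, eval_zero])
  have hδy : δ y ≠ 0 := fun h => hy (by rw [← hδ.1 y, h, eval_zero])
  have hdeg : (δ x).natDegree + (δ y).natDegree = 0 := by
    rw [← Polynomial.natDegree_mul hδx hδy, hprod, natDegree_C]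
  have hdx : (δ x).natDegree = 0 := Nat.eq_zero_of_add_eq_zero_right hdeg
  have hdy : (δ y).natDegree = 0 := Nat.eq_zero_of_add_eq_zero_left hdeg
  constructor
  · show δ x = CAlgHom x
    have hc : (δ x).coeff 0 = x := by rw [Polynomial.coeff_zero_eq_eval_zero]; exact hδ.1 x
    show δ x = C x
    rw [Polynomial.eq_C_of_natDegree_eq_zero hdx, hc]
  · show δ y = CAlgHom y
    have hc : (δ y).coeff 0 = y := by rw [Polynomial.coeff_zero_eq_eval_zero]; exact hδ.1 y
    show δ y = C y
    rw [Polynomial.eq_C_of_natDegree_eq_zero hdy, hc]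
end

section
/- Let B be a commutative k-domain and δ an exponential map on B. Define deg_δ(b) = deg_t(δ(b)) for nonzero b ∈ B and deg_δ(0) = -∞. Then deg_δ is a degree function: deg_δ(ab) = deg_δ(a) + deg_δ(b) for all a, b ∈ B, and deg_δ(a + b) ≤ max(deg_δ(a), deg_δ(b)) with equality when deg_δ(a) ≠ deg_δ(b). -/
open Polynomial

variable (k : Type) [Field k] (B : Type) [CommRing B] [IsDomain B] [Algebra k B]

theorem expDegree_is_degree_function (δ : B →ₐ[k] B[X]) (hδ : IsExpMap k B δ) :
    (∀ a b : B, (δ (a * b)).degree = (δ a).degree + (δ b).degree) ∧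
    (∀ a b : B, (δ (a + b)).degree ≤ max (δ a).degree (δ b).degree) ∧
    (∀ a b : B, (δ a).degree ≠ (δ b).degree →
      (δ (a + b)).degree = max (δ a).degree (δ b).degree) := by
  refine ⟨fun a b => by rw [map_mul, Polynomial.degree_mul],
    fun a b => by rw [map_add]; exact Polynomial.degree_add_le _ _,
    fun a b h => ?_⟩
  rw [map_add]
  rcases lt_or_gt_of_ne h with hlt | hlt
  · rw [Polynomial.degree_add_eq_right_of_degree_lt hlt, max_eq_right hlt.le]
  · rw [Polynomial.degree_add_eq_left_of_degree_lt hlt, max_eq_left hlt.le]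
end

section
/- Let B be a commutative k-domain, δ a nontrivial exponential map on B with iterative derivatives D_i (so δ(b) = Σ_i D_i(b) t^i), and let x ∈ B be a local slice of δ (an element of minimal positive δ-degree n). Then D_i(x) ∈ B^δ for all i > 0. -/
open Polynomial

variable (k : Type) [Field k] (B : Type) [CommRing B] [IsDomain B] [Algebra k B]

/-!
Write `D_j` for the iterative derivatives of `δ` and `n = deg_δ x`. Comparing coefficients of
`t^i` in the coaction law `δ_s (δ_t x) = δ_{s+t} x` gives
`δ (D_i x) = ∑_{j ≤ n} (j choose i) D_j(x) s^(j-i)`, so `deg_δ (D_i x) ≤ n - i < n` for `i > 0`.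
Minimality of `n` forces `deg_δ (D_i x) ≤ 0`, i.e. `δ (D_i x)` is a constant, and that constant
is `D_i x` because `ε₀ ∘ δ = id`.
-/

theorem Polynomial.natDegree_coeff_eval₂_C_X_add_X_le {R : Type*} [CommSemiring R] (p : R[X])
    (i : ℕ) :
    ((p.eval₂ ((C : R[X] →+* R[X][X]).comp C) (C X + X)).coeff i).natDegree ≤ p.natDegree - i := by
  rw [eval₂_eq_sum_range, finsetSum_coeff]
  refine natDegree_sum_le_of_forall_le _ _ fun j hj => ?_
  have hj : j ≤ p.natDegree := Nat.lt_succ_iff.mp (Finset.mem_range.mp hj)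
  rw [RingHom.comp_apply, coeff_C_mul, add_comm, coeff_X_add_C_pow, ← C_eq_natCast]
  calc (C (p.coeff j) * (X ^ (j - i) * C (j.choose i : R))).natDegree
      ≤ j - i := (natDegree_C_mul_le _ _).trans <| (natDegree_mul_C_le _ _).trans <|
        natDegree_X_pow_le _
    _ ≤ p.natDegree - i := Nat.sub_le_sub_right hj i

section ExpMap

variable {K A : Type} [Field K] [CommRing A] [Algebra K A] {δ : A →ₐ[K] A[X]}

theorem IsExpMap.apply_coeff (hδ : IsExpMap K A δ) (b : A) (i : ℕ) :
    δ ((δ b).coeff i) = ((δ b).eval₂ ((C : A[X] →+* A[X][X]).comp C) (C X + X)).coeff i := by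
  rw [← hδ.2 b, coeff_map]
  rfl

theorem IsExpMap.mem_expInv_of_degree_le_zero (hδ : IsExpMap K A δ) {b : A}
    (hb : (δ b).degree ≤ 0) : b ∈ expInv K A δ := by
  show δ b = C b
  rw [eq_C_of_degree_le_zero hb, coeff_zero_eq_eval_zero, hδ.1 b]

theorem IsLocalSlice.degree_le_zero_of_natDegree_lt {x y : A} (hx : IsLocalSlice K A δ x)
    (hy : (δ y).natDegree < (δ x).natDegree) : (δ y).degree ≤ 0 := by
  by_contra! hpos
  exact hy.not_ge (natDegree_le_natDegree (hx.2 y hpos))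

end ExpMap

theorem localSlice_derivatives_mem_invariants (δ : B →ₐ[k] B[X]) (hδ : IsExpMap k B δ)
    (x : B) (hx : IsLocalSlice k B δ x) :
    ∀ i : ℕ, 0 < i → (δ x).coeff i ∈ expInv k B δ := by
  intro i hi
  have hn : 0 < (δ x).natDegree := natDegree_pos_iff_degree_pos.mpr hx.1
  refine hδ.mem_expInv_of_degree_le_zero (hx.degree_le_zero_of_natDegree_lt ?_)
  calc (δ ((δ x).coeff i)).natDegree ≤ (δ x).natDegree - i := by
        rw [hδ.apply_coeff]
        exact natDegree_coeff_eval₂_C_X_add_X_le _ i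
    _ < (δ x).natDegree := Nat.sub_lt hn hi
end

section
/- Let B be a commutative k-domain, δ a nontrivial exponential map on B, x a local slice of δ with n = deg_δ(x), and c = D_n(x). Then the localization B[c^{-1}] equals B^δ[c^{-1}][x], a polynomial ring in x over B^δ[c^{-1}]. -/
/-!
Write `A = B^δ`, `n = deg_δ x`, `c = D_n x`. Leading coefficients of `δ b` are invariant, and
`D_l ∘ D_i = (i + l).choose i • D_(i + l)`. If `deg_δ b = m > 0` and `0 < j < n`, then
`D_(m-j) b` has degree `≤ j < n`, so it is invariant and `m.choose j = 0` in `B`. The same holds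
for `n`, so `(1 + T) ^ n = 1 + T ^ n`, and the coefficient of `T ^ (m % n)` in
`(1 + T) ^ m = (1 + T ^ n) ^ (m / n) * (1 + T) ^ (m % n)` forces `n ∣ m`. For `m = q n` the
element `c ^ q b - (D_m b) x ^ q` has smaller degree, so by induction some `c ^ N b` lies in
`A[x]`: this is surjectivity after inverting `c`. For injectivity, `δ (p(x)) = p(δ x)` is a
nonconstant polynomial when `p ≠ 0`, so `x` is transcendental over `A`, and clearing
denominators carries this over to `A[1/c]`.
-/

open Polynomial

variable (k : Type) [Field k] (B : Type) [CommRing B] [IsDomain B] [Algebra k B]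

theorem Polynomial.one_add_X_pow_eq_of_cast_choose_eq_zero {R : Type*} [CommRing R] {n : ℕ}
    (hn0 : 0 < n) (hn : ∀ j, 0 < j → j < n → (n.choose j : R) = 0) :
    (1 + X : R[X]) ^ n = 1 + X ^ n := by
  ext j
  rw [coeff_one_add_X_pow, coeff_add, coeff_one, coeff_X_pow]
  rcases Nat.lt_trichotomy j n with h | rfl | h
  · rcases Nat.eq_zero_or_pos j with rfl | hj
    · simp [hn0.ne]
    · simp [hn j hj h, hj.ne', h.ne]
  · simp [hn0.ne']
  · simp [Nat.choose_eq_zero_of_lt h, h.ne', (hn0.trans h).ne']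

theorem Nat.dvd_of_cast_choose_eq_zero {R : Type*} [CommRing R] [Nontrivial R] {n m : ℕ}
    (hn0 : 0 < n) (hn : ∀ j, 0 < j → j < n → (n.choose j : R) = 0)
    (hm : ∀ j, 0 < j → j < n → (m.choose j : R) = 0) : n ∣ m := by
  obtain ⟨q, r, hr, rfl⟩ : ∃ q r, r < n ∧ m = n * q + r :=
    ⟨m / n, m % n, Nat.mod_lt m hn0, (Nat.div_add_mod m n).symm⟩
  obtain ⟨g, hg⟩ : (X ^ n : R[X]) ∣ (1 + X ^ n) ^ q - 1 := by
    have h := sub_dvd_pow_sub_pow (1 + X ^ n : R[X]) 1 q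
    rwa [add_sub_cancel_left, one_pow] at h
  have hsplit : (1 + X : R[X]) ^ (n * q + r) = (1 + X) ^ r + X ^ n * (g * (1 + X) ^ r) := by
    rw [pow_add, pow_mul, one_add_X_pow_eq_of_cast_choose_eq_zero hn0 hn, eq_add_of_sub_eq' hg]
    ring
  have hcoeff : ((n * q + r).choose r : R) = 1 := by
    simpa [coeff_one_add_X_pow, coeff_X_pow_mul', hr.not_ge] using congrArg (coeff · r) hsplit
  rcases Nat.eq_zero_or_pos r with rfl | hr0
  · exact Dvd.intro q rfl
  · exact absurd (hcoeff.symm.trans (hm r hr0 hr)) one_ne_zero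

section ExpMap

variable {K S : Type} [Field K] [CommRing S] [Algebra K S] {δ : S →ₐ[K] S[X]}

theorem mem_expInv_iff {a : S} : a ∈ expInv K S δ ↔ δ a = C a := Iff.rfl

theorem map_aeval_eq_comp (b : S) (p : (expInv K S δ)[X]) :
    δ (aeval b p) = (p.map (algebraMap (expInv K S δ) S)).comp (δ b) := by
  have hinv : (δ : S →+* S[X]).comp (algebraMap (expInv K S δ) S) = C.comp (algebraMap _ S) :=
    RingHom.ext fun a => mem_expInv_iff.mp a.2
  rw [aeval_def, ← AlgHom.coe_toRingHom, hom_eval₂, hinv, comp, eval₂_map]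

theorem transcendental_expInv_of_degree_pos [NoZeroDivisors S] {b : S} (hb : 0 < (δ b).degree) :
    Transcendental (expInv K S δ) b := by
  refine transcendental_iff.mpr fun p hp => ?_
  have h := congrArg δ hp
  rw [map_aeval_eq_comp, map_zero, comp_eq_zero_iff] at h
  rcases h with h | ⟨-, h⟩
  · exact map_injective _ Subtype.val_injective (h.trans (Polynomial.map_zero _).symm)
  · exact absurd (h ▸ degree_C_le) hb.not_ge

namespace IsExpMap

theorem coeff_zero (hδ : IsExpMap K S δ) (b : S) : (δ b).coeff 0 = b := by
  rw [coeff_zero_eq_eval_zero, hδ.1]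

/-- The coefficient of `s ^ i * t ^ l` in `δ_t ∘ δ_s = δ_(s + t)`. -/
theorem coeff_coeff (hδ : IsExpMap K S δ) (b : S) (i l : ℕ) :
    (δ ((δ b).coeff i)).coeff l = ((i + l).choose i : S) * (δ b).coeff (i + l) := by
  have h := congrArg (fun q => (q.coeff i).coeff l) (hδ.2 b)
  simp only [coeff_map] at h
  rw [eval₂_eq_sum, sum_def, finsetSum_coeff, finsetSum_coeff] at h
  have key : ∀ j ∈ (δ b).support,
      (((C.comp C) ((δ b).coeff j) * (C X + X) ^ j).coeff i).coeff l
        = if j = i + l then ((i + l).choose i : S) * (δ b).coeff (i + l) else 0 := by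
    intro j _
    rw [RingHom.comp_apply, add_comm (C X) X, coeff_C_mul, coeff_X_add_C_pow, coeff_C_mul,
      coeff_mul_natCast, coeff_X_pow]
    by_cases hj : j = i + l
    · subst hj
      rw [if_pos rfl, if_pos (by omega)]
      ring
    · rw [if_neg hj]
      by_cases hij : i ≤ j
      · rw [if_neg (by omega : ¬ l = j - i)]
        ring
      · simp [Nat.choose_eq_zero_of_lt (not_le.mp hij)]
  rw [Finset.sum_congr rfl key, Finset.sum_ite_eq' (δ b).support] at h
  by_cases hmem : i + l ∈ (δ b).support
  · rwa [if_pos hmem] at h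
  · rw [if_neg hmem] at h
    rwa [notMem_support_iff.mp hmem, mul_zero]

theorem eq_C_of_degree_le_zero (hδ : IsExpMap K S δ) {b : S} (h : (δ b).degree ≤ 0) :
    δ b = C b := by
  rw [Polynomial.eq_C_of_degree_le_zero h, hδ.coeff_zero]

theorem map_leadingCoeff (hδ : IsExpMap K S δ) (b : S) :
    δ (δ b).leadingCoeff = C (δ b).leadingCoeff := by
  ext l
  rcases Nat.eq_zero_or_pos l with rfl | hl
  · rw [hδ.coeff_zero, coeff_C_zero]
  · rw [leadingCoeff, hδ.coeff_coeff, coeff_C, if_neg hl.ne',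
      coeff_eq_zero_of_natDegree_lt (by omega), mul_zero]

theorem degree_coeff_le (hδ : IsExpMap K S δ) (b : S) (i : ℕ) :
    (δ ((δ b).coeff i)).degree ≤ ((δ b).natDegree - i : ℕ) := by
  refine degree_le_iff_coeff_zero _ _ |>.mpr fun l hl => ?_
  have hl' : (δ b).natDegree - i < l := by exact_mod_cast hl
  rw [hδ.coeff_coeff, coeff_eq_zero_of_natDegree_lt (by omega), mul_zero]

theorem degree_leadingCoeff_pow_mul_sub_lt [IsDomain S] (hδ : IsExpMap K S δ) {x b : S}
    (hb : 0 < (δ b).degree) {q : ℕ} (hq : (δ b).natDegree = (δ x).natDegree * q) :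
    (δ ((δ x).leadingCoeff ^ q * b - (δ b).leadingCoeff * x ^ q)).degree < (δ b).degree := by
  have hb0 : δ b ≠ 0 := ne_zero_of_degree_gt hb
  have hx0 : δ x ≠ 0 := by
    rintro h
    rw [h, natDegree_zero, zero_mul, natDegree_eq_zero_iff_degree_le_zero] at hq
    exact hq.not_gt hb
  set P := C ((δ x).leadingCoeff ^ q) * δ b
  set Q := C (δ b).leadingCoeff * δ x ^ q
  have hPQ : δ ((δ x).leadingCoeff ^ q * b - (δ b).leadingCoeff * x ^ q) = P - Q := by
    simp only [P, Q, map_sub, map_mul, map_pow, hδ.map_leadingCoeff]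
  have hP : P.degree = (δ b).degree :=
    degree_C_mul (pow_ne_zero q (leadingCoeff_ne_zero.mpr hx0))
  have hQ : Q.degree = (δ b).degree := by
    rw [degree_C_mul (leadingCoeff_ne_zero.mpr hb0), degree_pow, degree_eq_natDegree hx0,
      degree_eq_natDegree hb0, hq, nsmul_eq_mul, mul_comm]
    norm_cast
  have hlc : P.leadingCoeff = Q.leadingCoeff := by
    simp only [P, Q, leadingCoeff_mul, leadingCoeff_C, leadingCoeff_pow, mul_comm]
  rw [hPQ, ← hP]
  exact degree_sub_lt_left (hP.trans hQ.symm) (ne_zero_of_degree_gt (hP ▸ hb)) hlc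

end IsExpMap

end ExpMap

namespace IsLocalSlice

variable {K S : Type} [Field K] [CommRing S] [Algebra K S] {δ : S →ₐ[K] S[X]} {x : S}

theorem natDegree_pos (hx : IsLocalSlice K S δ x) : 0 < (δ x).natDegree :=
  natDegree_pos_iff_degree_pos.mpr hx.1

theorem cast_choose_eq_zero [NoZeroDivisors S] (hδ : IsExpMap K S δ) (hx : IsLocalSlice K S δ x)
    {b : S} (hb : 0 < (δ b).degree) {j : ℕ} (hj0 : 0 < j) (hjn : j < (δ x).natDegree) :
    ((δ b).natDegree.choose j : S) = 0 := by
  have hjm : j ≤ (δ b).natDegree := hjn.le.trans (natDegree_le_natDegree (hx.2 b hb))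
  set d := (δ b).coeff ((δ b).natDegree - j) with hd
  have hdeg : (δ d).degree ≤ j := by
    simpa [Nat.sub_sub_self hjm] using hδ.degree_coeff_le b ((δ b).natDegree - j)
  have hinv : δ d = C d := by
    refine hδ.eq_C_of_degree_le_zero (not_lt.mp fun hpos => ?_)
    have := (hx.2 _ hpos).trans hdeg
    rw [degree_eq_natDegree (ne_zero_of_degree_gt hx.1), Nat.cast_le] at this
    omega
  have hj := congrArg (coeff · j) hinv
  simp only [hd, coeff_C, if_neg hj0.ne', hδ.coeff_coeff, Nat.sub_add_cancel hjm,
    Nat.choose_symm hjm] at hj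
  exact (mul_eq_zero.mp hj).resolve_right (leadingCoeff_ne_zero.mpr (ne_zero_of_degree_gt hb))

theorem natDegree_dvd [IsDomain S] (hδ : IsExpMap K S δ) (hx : IsLocalSlice K S δ x) {b : S}
    (hb : 0 < (δ b).degree) : (δ x).natDegree ∣ (δ b).natDegree :=
  Nat.dvd_of_cast_choose_eq_zero hx.natDegree_pos
    (fun _ hj0 hjn => cast_choose_eq_zero hδ hx hx.1 hj0 hjn)
    (fun _ hj0 hjn => cast_choose_eq_zero hδ hx hb hj0 hjn)

theorem exists_leadingCoeff_pow_mul_mem_adjoin [IsDomain S] (hδ : IsExpMap K S δ)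
    (hx : IsLocalSlice K S δ x) (b : S) :
    ∃ N, (δ x).leadingCoeff ^ N * b ∈ Algebra.adjoin (expInv K S δ) {x} := by
  induction hm : (δ b).natDegree using Nat.strong_induction_on generalizing b with
  | _ m ih =>
  by_cases h0 : (δ b).degree ≤ 0
  · have hb : b ∈ expInv K S δ := hδ.eq_C_of_degree_le_zero h0
    exact ⟨0, by
      simpa using Subalgebra.algebraMap_mem (Algebra.adjoin (expInv K S δ) {x}) ⟨b, hb⟩⟩
  rw [not_le] at h0
  obtain ⟨q, hq⟩ := hx.natDegree_dvd hδ h0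
  set c := (δ x).leadingCoeff
  set f := (δ b).leadingCoeff
  have hlt : (δ (c ^ q * b - f * x ^ q)).natDegree < m := by
    rcases eq_or_ne (δ (c ^ q * b - f * x ^ q)) 0 with h | h
    · rw [h, natDegree_zero, ← hm]
      exact natDegree_pos_iff_degree_pos.mpr h0
    · exact hm ▸ natDegree_lt_natDegree h (hδ.degree_leadingCoeff_pow_mul_sub_lt h0 hq)
  obtain ⟨N, hN⟩ := ih _ hlt _ rfl
  have hcf : c ^ N * f ∈ expInv K S δ :=
    mul_mem (pow_mem (hδ.map_leadingCoeff x) N) (hδ.map_leadingCoeff b)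
  refine ⟨N + q, ?_⟩
  have hsplit : c ^ (N + q) * b = c ^ N * (c ^ q * b - f * x ^ q) + c ^ N * f * x ^ q := by ring
  rw [hsplit]
  exact add_mem hN (mul_mem (Subalgebra.algebraMap_mem _ (⟨_, hcf⟩ : expInv K S δ))
    (pow_mem (Algebra.self_mem_adjoin_singleton _ x) q))

end IsLocalSlice

section Away

variable {R S : Type*} [CommRing R] [CommRing S] [Algebra R S] (A : Subalgebra R S) (c : S)

/-- `A[1/c]`, inside `S[1/c]`. -/
def awaySubalgebra : Subalgebra R (Localization.Away c) :=
  Algebra.adjoin R (algebraMap S (Localization.Away c) '' (A : Set S) ∪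
    {Ring.inverse (algebraMap S (Localization.Away c) c)})

def toAwaySubalgebra : A →+* awaySubalgebra A c :=
  ((algebraMap S (Localization.Away c)).comp (algebraMap A S)).codRestrict _
    fun a => Algebra.subset_adjoin (Or.inl ⟨a, a.2, rfl⟩)

variable {A c}

theorem inverse_mem_awaySubalgebra :
    Ring.inverse (algebraMap S (Localization.Away c) c) ∈ awaySubalgebra A c :=
  Algebra.subset_adjoin (Or.inr rfl)

theorem isUnit_toAwaySubalgebra (hc : c ∈ A) : IsUnit (toAwaySubalgebra A c ⟨c, hc⟩) :=
  .of_mul_eq_one ⟨_, inverse_mem_awaySubalgebra⟩ <| Subtype.ext <|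
    Ring.mul_inverse_cancel _ (IsLocalization.Away.algebraMap_isUnit c)

theorem aeval_map_toAwaySubalgebra (x : S) (p : A[X]) :
    aeval (algebraMap S (Localization.Away c) x) (p.map (toAwaySubalgebra A c)) =
      algebraMap S (Localization.Away c) (aeval x p) := by
  rw [aeval_def, eval₂_map, aeval_def, hom_eval₂]
  rfl

theorem exists_mul_pow_mem_range_of_mem_awaySubalgebra (hc : c ∈ A) (z : awaySubalgebra A c) :
    ∃ N, z * toAwaySubalgebra A c ⟨c, hc⟩ ^ N ∈ (toAwaySubalgebra A c).range := by
  obtain ⟨z, hz⟩ := z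
  suffices ∃ N, ∃ a ∈ A, z * algebraMap S _ c ^ N = algebraMap S _ a by
    obtain ⟨N, a, ha, h⟩ := this
    exact ⟨N, ⟨a, ha⟩, Subtype.ext h.symm⟩
  induction hz using Algebra.adjoin_induction with
  | mem w hw =>
    rcases hw with ⟨a, ha, rfl⟩ | rfl
    · exact ⟨0, a, ha, mul_one _⟩
    · refine ⟨1, 1, one_mem A, ?_⟩
      rw [pow_one, map_one, Ring.inverse_mul_cancel _ (IsLocalization.Away.algebraMap_isUnit c)]
  | algebraMap r =>
    exact ⟨0, algebraMap R S r, A.algebraMap_mem r, by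
      rw [pow_zero, mul_one, ← IsScalarTower.algebraMap_apply]⟩
  | add z₁ z₂ _ _ ih₁ ih₂ =>
    obtain ⟨N₁, a₁, ha₁, h₁⟩ := ih₁
    obtain ⟨N₂, a₂, ha₂, h₂⟩ := ih₂
    refine ⟨N₁ + N₂, a₁ * c ^ N₂ + a₂ * c ^ N₁,
      add_mem (mul_mem ha₁ (pow_mem hc N₂)) (mul_mem ha₂ (pow_mem hc N₁)), ?_⟩
    rw [map_add, map_mul, map_mul, map_pow, map_pow, ← h₁, ← h₂]
    ring
  | mul z₁ z₂ _ _ ih₁ ih₂ =>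
    obtain ⟨N₁, a₁, ha₁, h₁⟩ := ih₁
    obtain ⟨N₂, a₂, ha₂, h₂⟩ := ih₂
    refine ⟨N₁ + N₂, a₁ * a₂, mul_mem ha₁ ha₂, ?_⟩
    rw [map_mul, ← h₁, ← h₂]
    ring

theorem exists_C_pow_mul_mem_lifts (hc : c ∈ A) (p : (awaySubalgebra A c)[X]) :
    ∃ N, C (toAwaySubalgebra A c ⟨c, hc⟩) ^ N * p ∈ lifts (toAwaySubalgebra A c) := by
  induction p using Polynomial.induction_on' with
  | add p q hp hq =>
    obtain ⟨M, hM⟩ := hp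
    obtain ⟨N, hN⟩ := hq
    refine ⟨M + N, ?_⟩
    set d := C (toAwaySubalgebra A c ⟨c, hc⟩)
    rw [show d ^ (M + N) * (p + q) = d ^ N * (d ^ M * p) + d ^ M * (d ^ N * q) by ring]
    exact add_mem (mul_mem (pow_mem (C_mem_lifts _ _) N) hM)
      (mul_mem (pow_mem (C_mem_lifts _ _) M) hN)
  | monomial n z =>
    obtain ⟨N, a, ha⟩ := exists_mul_pow_mem_range_of_mem_awaySubalgebra hc z
    refine ⟨N, ?_⟩
    rw [← C_pow, C_mul_monomial, mul_comm, ← ha]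
    exact monomial_mem_lifts n ⟨a, rfl⟩

theorem Transcendental.algebraMap_awaySubalgebra (hc : c ∈ A) (hc0 : c ∈ nonZeroDivisors S)
    {x : S} (hx : Transcendental A x) :
    Transcendental (awaySubalgebra A c) (algebraMap S (Localization.Away c) x) := by
  refine transcendental_iff.mpr fun p hp => ?_
  obtain ⟨N, hN⟩ := exists_C_pow_mul_mem_lifts hc p
  obtain ⟨q, hq⟩ := (mem_lifts _).mp hN
  have hq0 : q = 0 := by
    refine transcendental_iff.mp hx q (IsLocalization.injective (Localization.Away c)
      (Submonoid.powers_le.mpr hc0) ?_)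
    rw [← aeval_map_toAwaySubalgebra, map_zero]
    exact (congrArg _ hq).trans (by rw [map_mul, hp, mul_zero])
  rw [hq0, Polynomial.map_zero, ← C_pow] at hq
  exact (((isUnit_toAwaySubalgebra hc).pow N).map C).mul_right_eq_zero.mp hq.symm

theorem aeval_algebraMap_surjective {x : S}
    (hx : ∀ b, ∃ N, c ^ N * b ∈ Algebra.adjoin A {x}) :
    Function.Surjective (aeval (algebraMap S (Localization.Away c) x) :
      (awaySubalgebra A c)[X] →ₐ[awaySubalgebra A c] Localization.Away c) := by
  intro z
  obtain ⟨M, b, hz⟩ := IsLocalization.Away.surj c z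
  obtain ⟨N, hN⟩ := hx b
  obtain ⟨q, hq⟩ : ∃ q : A[X], aeval x q = c ^ N * b := by
    rwa [Algebra.adjoin_singleton_eq_range_aeval] at hN
  set u : awaySubalgebra A c := ⟨_, inverse_mem_awaySubalgebra⟩
  have hu : algebraMap S (Localization.Away c) c * u = 1 :=
    Ring.mul_inverse_cancel _ (IsLocalization.Away.algebraMap_isUnit c)
  refine ⟨q.map (toAwaySubalgebra A c) * C u ^ (N + M), ?_⟩
  rw [map_mul, map_pow, aeval_map_toAwaySubalgebra, aeval_C, Subalgebra.algebraMap_apply, hq,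
    map_mul, map_pow, ← hz]
  calc _ = z * (algebraMap S (Localization.Away c) c * u) ^ (N + M) := by ring
    _ = z := by rw [hu, one_pow, mul_one]

end Away

theorem localization_at_plinth_is_polynomial_ring (δ : B →ₐ[k] B[X]) (hδ : IsExpMap k B δ)
    (x : B) (hx : IsLocalSlice k B δ x)
    (c : B) (hc : c = (δ x).coeff (δ x).natDegree) :
    Function.Bijective
      (Polynomial.aeval (algebraMap B (Localization.Away c) x) :
        Polynomial (Algebra.adjoin k
          ((algebraMap B (Localization.Away c) '' (expInv k B δ : Set B)) ∪
            {Ring.inverse (algebraMap B (Localization.Away c) c)})) →ₐ[Algebra.adjoin k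
          ((algebraMap B (Localization.Away c) '' (expInv k B δ : Set B)) ∪
            {Ring.inverse (algebraMap B (Localization.Away c) c)})]
        Localization.Away c) := by
  have hcA : c ∈ expInv k B δ := hc ▸ hδ.map_leadingCoeff x
  have hc0 : c ≠ 0 := hc ▸ leadingCoeff_ne_zero.mpr (ne_zero_of_degree_gt hx.1)
  refine ⟨transcendental_iff_injective.mp ?_, aeval_algebraMap_surjective fun b => ?_⟩
  · exact (transcendental_expInv_of_degree_pos hx.1).algebraMap_awaySubalgebra hcA
      (mem_nonZeroDivisors_of_ne_zero hc0)
  · exact hc ▸ hx.exists_leadingCoeff_pow_mul_mem_adjoin hδ b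
end

section
/- Let k be a field and B a k-domain with tr.deg_k B = 1 such that k is algebraically closed in B. Then ML(B) = k if and only if B ≅ k^[1]; otherwise ML(B) = B (i.e., B is rigid). -/
open Polynomial

variable (k : Type) [Field k] (B : Type) [CommRing B] [IsDomain B] [Algebra k B]

set_option linter.unusedSectionVars false
set_option linter.unusedVariables false
set_option maxHeartbeats 1000000

namespace MLRig

variable {k B}
variable (δ : B →ₐ[k] B[X])

lemma mem_expInv_iff {b : B} : b ∈ expInv k B δ ↔ δ b = C b := by
  simp [expInv, AlgHom.mem_equalizer, CAlgHom_apply]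

lemma delta_ne_zero (hδ : IsExpMap k B δ) {b : B} (hb : b ≠ 0) : δ b ≠ 0 := by
  intro h
  have := hδ.1 b
  rw [h] at this
  simp at this
  exact hb this.symm

lemma delta_eq_C (hδ : IsExpMap k B δ) {b : B} (h : (δ b).natDegree = 0) : δ b = C b := by
  obtain ⟨c, hc⟩ := Polynomial.natDegree_eq_zero.mp h
  have := hδ.1 b
  rw [← hc] at this ⊢
  simp at this
  rw [this]

lemma algebraMap_mem_expInv (c : k) : algebraMap k B c ∈ expInv k B δ :=
  Subalgebra.algebraMap_mem _ c

/-- coefficient extraction for eval₂ C -/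
lemma coeff_eval₂_C (Q D : B[X]) (M : ℕ) (hQ : Q.natDegree ≤ M) (hD : 1 ≤ D.natDegree) :
    (Q.eval₂ C D).coeff (M * D.natDegree) = Q.coeff M * D.leadingCoeff ^ M := by
  rw [eval₂_eq_sum_range' C (Nat.lt_succ_of_le hQ) D, finset_sum_coeff,
    Finset.sum_range_succ]
  have h0 : ∀ i ∈ Finset.range M,
      (C (Q.coeff i) * D ^ i).coeff (M * D.natDegree) = 0 := by
    intro i hi
    apply coeff_eq_zero_of_natDegree_lt
    calc (C (Q.coeff i) * D ^ i).natDegree ≤ (C (Q.coeff i)).natDegree + (D ^ i).natDegree :=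
          natDegree_mul_le
      _ ≤ i * D.natDegree := by simp [natDegree_pow]
      _ < M * D.natDegree := by
          exact Nat.mul_lt_mul_of_lt_of_le (Finset.mem_range.mp hi) le_rfl hD
  rw [Finset.sum_eq_zero h0, zero_add, coeff_C_mul, ← natDegree_pow,
    ← leadingCoeff_pow]
  rfl

lemma coeff_aeval_top (g : k[X]) (D : B[X]) (M : ℕ) (hg : g.natDegree ≤ M)
    (hD : 1 ≤ D.natDegree) :
    (aeval D g).coeff (M * D.natDegree) = algebraMap k B (g.coeff M) * D.leadingCoeff ^ M := by
  have : (aeval D g : B[X]) = (g.map (algebraMap k B)).eval₂ C D := by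
    rw [eval₂_map, aeval_def]
    rfl
  rw [this, coeff_eval₂_C _ _ M (le_trans (natDegree_map_le) hg) hD, coeff_map]

lemma natDegree_aeval_le (g : k[X]) (D : B[X]) :
    (aeval D g).natDegree ≤ g.natDegree * D.natDegree := by
  rw [show (aeval D g : B[X]) = (g.map (algebraMap k B)).eval₂ C D by
    rw [eval₂_map, aeval_def]; rfl]
  rw [eval₂_eq_sum_range' C (Nat.lt_succ_of_le (natDegree_map_le)) D]
  apply natDegree_sum_le_of_forall_le
  intro i hi
  calc (C ((g.map (algebraMap k B)).coeff i) * D ^ i).natDegree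
      ≤ _ + (D ^ i).natDegree := natDegree_mul_le
    _ ≤ i * D.natDegree := by simp [natDegree_pow]
    _ ≤ g.natDegree * D.natDegree :=
        by
          have h2 := Finset.mem_range.mp hi
          have h3 : i ≤ g.natDegree := Nat.lt_succ_iff.mp h2
          exact Nat.mul_le_mul_right _ h3


variable {δ}

lemma delta_coeff_eq (hδ : IsExpMap k B δ) (b : B) (i : ℕ) :
    δ ((δ b).coeff i) =
      ∑ j ∈ Finset.range ((δ b).natDegree + 1),
        C ((δ b).coeff j) * ((X : B[X]) ^ (j - i) * (j.choose i : B[X])) := by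
  have h2 := congrArg (fun P => Polynomial.coeff P i) (hδ.2 b)
  simp only [coeff_map] at h2
  rw [eval₂_eq_sum_range] at h2
  simp only [finset_sum_coeff, RingHom.coe_comp, Function.comp_apply, coeff_C_mul,
    add_comm (C (X : B[X])) (X : (B[X])[X]), coeff_X_add_C_pow] at h2
  exact h2

lemma natDegree_delta_coeff_le (hδ : IsExpMap k B δ) (b : B) (i : ℕ) :
    (δ ((δ b).coeff i)).natDegree ≤ (δ b).natDegree - i := by
  rw [delta_coeff_eq hδ b i]
  apply natDegree_sum_le_of_forall_le
  intro j hj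
  have hj' : j ≤ (δ b).natDegree := Nat.lt_succ_iff.mp (Finset.mem_range.mp hj)
  have h1 : ((X : B[X]) ^ (j - i) * ((j.choose i : B[X]))).natDegree ≤ j - i :=
    le_trans natDegree_mul_le (by simp [natDegree_X_pow, natDegree_natCast])
  refine le_trans natDegree_mul_le ?_
  rw [natDegree_C, zero_add]
  exact le_trans h1 (by omega)

lemma delta_coeff_top (hδ : IsExpMap k B δ) (b : B) {i : ℕ} (hi : i ≤ (δ b).natDegree) :
    (δ ((δ b).coeff i)).coeff ((δ b).natDegree - i) =
      ((δ b).natDegree.choose i : B) * ((δ b).coeff (δ b).natDegree) := by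
  rw [delta_coeff_eq hδ b i, finset_sum_coeff]
  rw [Finset.sum_eq_single ((δ b).natDegree)]
  · rw [coeff_C_mul, ← C_eq_natCast, coeff_mul_C, coeff_X_pow]
    simp [mul_comm]
  · intro j hj hne
    have hj' : j ≤ (δ b).natDegree := Nat.lt_succ_iff.mp (Finset.mem_range.mp hj)
    rcases lt_or_ge j i with hlt | hge
    · rw [Nat.choose_eq_zero_of_lt hlt]
      simp
    · rw [coeff_C_mul, ← C_eq_natCast, coeff_mul_C, coeff_X_pow, if_neg (by omega)]
      simp
  · intro h
    exact absurd (Finset.self_mem_range_succ _) h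

lemma coeff_natDegree_mem_expInv (hδ : IsExpMap k B δ) (b : B) :
    (δ b).coeff (δ b).natDegree ∈ expInv k B δ := by
  rw [mem_expInv_iff]
  have hle := natDegree_delta_coeff_le hδ b ((δ b).natDegree)
  simp only [Nat.sub_self, Nat.le_zero] at hle
  exact delta_eq_C δ hδ hle

/-- Applying δ to a vanishing polynomial relation with invariant coefficients. -/
lemma eval₂_delta_eq_zero (hδ : IsExpMap k B δ) {Q : B[X]} {y : B}
    (hc : ∀ i, Q.coeff i ∈ expInv k B δ) (hy : Q.eval y = 0) :
    Q.eval₂ C (δ y) = 0 := by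
  have h0 : δ (Q.eval y) = 0 := by rw [hy, map_zero]
  rw [eval_eq_sum_range, map_sum] at h0
  simp only [map_mul, map_pow] at h0
  rw [eval₂_eq_sum_range]
  rw [Finset.sum_congr rfl (fun i _ => by rw [(mem_expInv_iff δ).mp (hc i)])] at h0
  exact h0


/-- Invariants of a nontrivial exponential map are algebraic over k. -/
theorem expInv_eq_bot (hδ : IsExpMap k B δ) (hnt : ∃ y : B, δ y ≠ C y)
    (h1 : HasTrdeg k B 1)
    (hac : ∀ b : B, IsAlgebraic k b → b ∈ Set.range (algebraMap k B)) :
    expInv k B δ = ⊥ := by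
  refine le_antisymm (fun b hb => ?_) bot_le
  rw [Algebra.mem_bot]
  apply hac
  by_contra htr
  obtain ⟨x, hx⟩ := h1
  haveI := hx.isAlgebraic
  set x0 := x 0 with hx0def
  -- a polynomial relation over the adjoin of x0 for any element
  have getQ : ∀ y : B, ∃ Q : B[X], Q ≠ 0 ∧ Q.eval y = 0 ∧
      ∀ i, Q.coeff i ∈ Algebra.adjoin k (Set.range x) := by
    intro y
    obtain ⟨Q, hQ0, hQev⟩ := Algebra.IsAlgebraic.isAlgebraic
      (R := Algebra.adjoin k (Set.range x)) y
    have hinj : Function.Injective (algebraMap (Algebra.adjoin k (Set.range x)) B) :=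
      Subtype.coe_injective
    refine ⟨Q.map (algebraMap _ B), ?_, ?_, ?_⟩
    · exact (Polynomial.map_ne_zero_iff hinj).mpr hQ0
    · rw [eval_map, ← aeval_def]
      exact hQev
    · intro i
      rw [coeff_map]
      exact SetLike.coe_mem (Q.coeff i)
  rcases Nat.eq_zero_or_pos ((δ x0).natDegree) with he | he
  · -- x0 is invariant, so everything is algebraic over invariants: contradict hnt
    obtain ⟨y, hy⟩ := hnt
    have hm : 1 ≤ (δ y).natDegree := by
      rcases Nat.eq_zero_or_pos ((δ y).natDegree) with h | h
      · exact absurd (delta_eq_C δ hδ h) hy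
      · exact h
    obtain ⟨Q, hQ0, hQev, hQmem⟩ := getQ y
    have hadj : Algebra.adjoin k (Set.range x) ≤ expInv k B δ := by
      apply Algebra.adjoin_le
      rintro _ ⟨i, rfl⟩
      rw [Subsingleton.elim i 0]
      rw [SetLike.mem_coe, mem_expInv_iff]
      exact delta_eq_C δ hδ he
    have h0 := eval₂_delta_eq_zero hδ (fun i => hadj (hQmem i)) hQev
    have htop := coeff_eval₂_C Q (δ y) Q.natDegree le_rfl hm
    rw [h0, coeff_zero] at htop
    exact (mul_ne_zero (leadingCoeff_ne_zero.mpr hQ0)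
      (pow_ne_zero _ (leadingCoeff_ne_zero.mpr (fun h => by simp [h] at hm)))) htop.symm
  · -- x0 has positive degree: b invariant transcendental is impossible
    obtain ⟨Q, hQ0, hQev, hQmem⟩ := getQ b
    set D := δ x0 with hD
    have hlc : D.leadingCoeff ≠ 0 := leadingCoeff_ne_zero.mpr (fun h => by
      rw [h] at he; simp at he)
    have hmem' : ∀ i, Q.coeff i ∈ Algebra.adjoin k {x0} := by
      intro i
      have hsets : Set.range x = {x0} := by
        rw [Set.range_unique, Subsingleton.elim (default : Fin 1) 0]
      rw [← hsets]
      exact hQmem i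
    have hpex : ∀ i, ∃ g : k[X], aeval x0 g = Q.coeff i := by
      intro i
      have := hmem' i
      rw [Algebra.adjoin_singleton_eq_range_aeval] at this
      exact this
    choose p hp using hpex
    set n := Q.natDegree with hn
    set M := (Finset.range (n + 1)).sup (fun i => (p i).natDegree) with hM
    -- apply δ to the relation
    have h0 : δ (Q.eval b) = 0 := by rw [hQev, map_zero]
    rw [eval_eq_sum_range, map_sum] at h0
    simp only [map_mul, map_pow] at h0
    have hbC : δ b = C b := (mem_expInv_iff δ).mp hb
    have hrw : ∀ i ∈ Finset.range (n + 1),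
        δ (Q.coeff i) * (δ b) ^ i = aeval D (p i) * (C b) ^ i := by
      intro i _
      rw [hbC, ← hp i, aeval_algHom_apply]
    rw [Finset.sum_congr rfl hrw] at h0
    have h1 := congrArg (fun P => Polynomial.coeff P (M * D.natDegree)) h0
    simp only [finset_sum_coeff, coeff_zero] at h1
    have hterm : ∀ i ∈ Finset.range (n + 1),
        (aeval D (p i) * (C b) ^ i).coeff (M * D.natDegree) =
          (algebraMap k B ((p i).coeff M) * b ^ i) * D.leadingCoeff ^ M := by
      intro i hi
      rw [← C_pow, coeff_mul_C, coeff_aeval_top (p i) D M (Finset.le_sup (f := fun i => (p i).natDegree) hi) he]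
      ring
    rw [Finset.sum_congr rfl hterm, ← Finset.sum_mul] at h1
    have h2 : ∑ i ∈ Finset.range (n + 1), algebraMap k B ((p i).coeff M) * b ^ i = 0 := by
      rcases mul_eq_zero.mp h1 with h | h
      · exact h
      · exact absurd h (pow_ne_zero _ hlc)
    -- build the nonzero polynomial over k killed by b
    set g : k[X] := ∑ i ∈ Finset.range (n + 1), C ((p i).coeff M) * X ^ i with hg
    have hgev : aeval b g = 0 := by
      rw [hg, map_sum]
      simp only [map_mul, map_pow, aeval_C, aeval_X]
      exact h2
    have hgcoeff : ∀ i ∈ Finset.range (n + 1), g.coeff i = (p i).coeff M := by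
      intro i hi
      rw [hg, finset_sum_coeff]
      rw [Finset.sum_eq_single i]
      · simp
      · intro j _ hj
        rw [coeff_C_mul, coeff_X_pow, if_neg (fun h => hj h.symm)]
        simp
      · intro h
        exact absurd hi h
    -- the top index n works: Q.coeff n ≠ 0
    have hQn : Q.coeff n ≠ 0 := by
      rw [hn]
      exact leadingCoeff_ne_zero.mpr hQ0
    have hpn : p n ≠ 0 := fun h => hQn (by rw [← hp n, h, map_zero])
    have hg0 : g ≠ 0 := by
      rcases Nat.eq_zero_or_pos M with hM0 | hMpos
      · intro h
        apply hQn
        have := hgcoeff n (Finset.self_mem_range_succ n)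
        rw [h, coeff_zero] at this
        have hcn : (p n).coeff M = 0 := this.symm
        have : (p n).natDegree = 0 := by
          have h5 := Finset.le_sup (f := fun i => (p i).natDegree) (Finset.self_mem_range_succ n)
          have h6 : (p n).natDegree ≤ M := h5
          omega
        rw [← hp n]
        rw [Polynomial.eq_C_of_natDegree_eq_zero this]
        rw [hM0] at hcn
        rw [← this] at hcn
        rw [Polynomial.coeff_natDegree] at hcn
        rw [leadingCoeff_eq_zero.mp hcn]
        simp
      · obtain ⟨i0, hi0mem, hi0⟩ := Finset.exists_mem_eq_sup (Finset.range (n + 1))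
          (Finset.nonempty_range_add_one) (fun i => (p i).natDegree)
        intro h
        have hpi0 : p i0 ≠ 0 := by
          intro hz
          rw [hz] at hi0
          simp only [natDegree_zero] at hi0
          omega
        have := hgcoeff i0 hi0mem
        rw [h, coeff_zero] at this
        rw [hM, hi0] at this
        exact hpi0 (leadingCoeff_eq_zero.mp this.symm)
    exact htr ⟨g, hg0, hgev⟩


lemma choose_pow_mul_cast_zmod (p : ℕ) (hp : p.Prime) (a u : ℕ) :
    (((p ^ a * u).choose (p ^ a) : ℤ) : ZMod p) = ((u : ℤ) : ZMod p) := by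
  haveI := Fact.mk hp
  have hq : 0 < p ^ a := pow_pos hp.pos a
  have h := Choose.choose_modEq_choose_mul_prod_range_choose
    (n := p ^ a * u) (k := p ^ a) (p := p) a
  rw [Nat.mul_div_cancel_left u hq, Nat.div_self hq, Nat.choose_one_right] at h
  have hprod : ∏ i ∈ Finset.range a,
      (p ^ a * u / p ^ i % p).choose (p ^ a / p ^ i % p) = 1 := by
    apply Finset.prod_eq_one
    intro i hi
    have hia : i ≤ a := le_of_lt (Finset.mem_range.mp hi)
    have h3 : p ^ a / p ^ i % p = 0 := by
      rw [Nat.pow_div hia hp.pos]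
      obtain ⟨j, hj⟩ : ∃ j, a - i = j + 1 :=
        ⟨a - i - 1, by have := Finset.mem_range.mp hi; omega⟩
      rw [hj, pow_succ, Nat.mul_mod_left]
    rw [h3, Nat.choose_zero_right]
  rw [hprod, Nat.cast_one, mul_one] at h
  exact (ZMod.intCast_eq_intCast_iff _ _ _).mpr h

lemma d_eq_pow {p : ℕ} (hp : p.Prime) [CharP k p] {d : ℕ} (hd : 0 < d)
    (H : ∀ i, 0 < i → i < d → ((d.choose i : k) = 0)) : ∃ c, d = p ^ c := by
  set a := d.factorization p with ha
  set u := d / p ^ a with hu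
  have hdau : p ^ a * u = d := Nat.ordProj_mul_ordCompl_eq_self d p
  have hpu : ¬ p ∣ u := Nat.not_dvd_ordCompl hp (by omega)
  rcases eq_or_ne u 1 with hu1 | hune
  · exact ⟨a, by rw [← hdau, hu1, mul_one]⟩
  · exfalso
    have hu0 : u ≠ 0 := by intro h; rw [h, mul_zero] at hdau; omega
    have hu2 : 2 ≤ u := (Nat.two_le_iff u).mpr ⟨hu0, hune⟩
    have hq1 : 1 ≤ p ^ a := Nat.one_le_pow _ _ hp.pos
    have hqd : p ^ a < d := by nlinarith
    have h0 := H (p ^ a) (by omega) hqd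
    have hdvd : p ∣ d.choose (p ^ a) := (CharP.cast_eq_zero_iff k p _).mp h0
    have h2 : ((d.choose (p ^ a) : ℤ) : ZMod p) = ((u : ℤ) : ZMod p) := by
      conv_lhs => rw [← hdau]
      exact choose_pow_mul_cast_zmod p hp a u
    haveI : NeZero p := ⟨hp.ne_zero⟩
    rw [Int.cast_natCast, Int.cast_natCast, (ZMod.natCast_eq_zero_iff _ _).mpr hdvd] at h2
    exact hpu ((ZMod.natCast_eq_zero_iff _ _).mp h2.symm)


theorem equiv_of_nontrivial (hδ : IsExpMap k B δ) (hnt : ∃ y : B, δ y ≠ C y)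
    (h1 : HasTrdeg k B 1)
    (hac : ∀ b : B, IsAlgebraic k b → b ∈ Set.range (algebraMap k B)) :
    Nonempty (B ≃ₐ[k] k[X]) := by
  classical
  have hbot := expInv_eq_bot hδ hnt h1 hac
  have hFinj : Function.Injective (algebraMap k B) := (algebraMap k B).injective
  have hS : ∃ n, 0 < n ∧ ∃ b : B, (δ b).natDegree = n := by
    obtain ⟨y, hy⟩ := hnt
    refine ⟨(δ y).natDegree, ?_, y, rfl⟩
    rcases Nat.eq_zero_or_pos ((δ y).natDegree) with h | h
    · exact absurd (delta_eq_C δ hδ h) hy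
    · exact h
  set d := Nat.find hS with hddef
  obtain ⟨hd, x, hx⟩ := Nat.find_spec hS
  rw [← hddef] at hd hx
  have hmin : ∀ b : B, 0 < (δ b).natDegree → d ≤ (δ b).natDegree := by
    intro b hbpos
    by_contra hlt
    exact Nat.find_min hS (by omega) ⟨hbpos, b, rfl⟩
  have hinvk : ∀ b : B, b ∈ expInv k B δ → ∃ c : k, algebraMap k B c = b := by
    intro b hbmem
    rw [hbot, Algebra.mem_bot] at hbmem
    exact hbmem
  obtain ⟨mu, hmu⟩ := hinvk _ (coeff_natDegree_mem_expInv hδ x)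
  have hdx0 : δ x ≠ 0 := fun h => by rw [h] at hx; simp at hx; omega
  have hdxdeg : 1 ≤ (δ x).natDegree := by omega
  have hmu0 : mu ≠ 0 := by
    intro h
    rw [h, map_zero] at hmu
    rw [coeff_natDegree] at hmu
    exact leadingCoeff_ne_zero.mpr hdx0 hmu.symm
  have hmu' : (δ x).leadingCoeff = algebraMap k B mu := by
    rw [← coeff_natDegree, ← hmu]
  -- middle binomial coefficients of d vanish in k
  have hbinom : ∀ i, 0 < i → i < d → ((d.choose i : k) = 0) := by
    intro i hi0 hid
    have h7 : (δ ((δ x).coeff i)).natDegree ≤ d - i := by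
      have := natDegree_delta_coeff_le hδ x i
      rwa [hx] at this
    have hciinv : δ ((δ x).coeff i) = C ((δ x).coeff i) := by
      rcases Nat.eq_zero_or_pos ((δ ((δ x).coeff i)).natDegree) with h | h
      · exact delta_eq_C δ hδ h
      · exact absurd (hmin _ h) (by omega)
    have h8 := delta_coeff_top hδ x (i := i) (by omega)
    rw [hciinv, coeff_C, if_neg (show (δ x).natDegree - i ≠ 0 from by rw [hx]; omega)] at h8
    rw [coeff_natDegree, hmu', hx] at h8
    rw [show ((d.choose i : B)) = algebraMap k B ((d.choose i : k)) from
      (map_natCast _ _).symm, ← map_mul] at h8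
    have h9 := hFinj (a₁ := (d.choose i : k) * mu) (a₂ := 0) (by rw [map_zero, ← h8])
    rcases mul_eq_zero.mp h9 with h | h
    · exact h
    · exact absurd h hmu0
  have hdpow : d = 1 ∨ ∃ (p c : ℕ), p.Prime ∧ CharP k p ∧ d = p ^ c := by
    obtain ⟨p, hp⟩ := CharP.exists k
    rcases CharP.char_is_prime_or_zero k p with hpr | hp0
    · obtain ⟨c, hc⟩ := d_eq_pow (k := k) hpr hd hbinom
      exact Or.inr ⟨p, c, hpr, hp, hc⟩
    · left
      subst hp0
      haveI : CharZero k := CharP.charP_to_charZero k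
      by_contra hd1
      have h2d : 2 ≤ d := by omega
      have := hbinom 1 one_pos (by omega)
      rw [Nat.choose_one_right] at this
      exact (by omega : d ≠ 0) (Nat.cast_eq_zero.mp this)
  -- main induction
  have main : ∀ n : ℕ, ∀ b : B, (δ b).natDegree ≤ n → b ∈ Algebra.adjoin k {x} := by
    intro n
    induction n with
    | zero =>
      intro b hb
      have h := delta_eq_C δ hδ (Nat.le_zero.mp hb)
      obtain ⟨c, hc⟩ := hinvk b ((mem_expInv_iff δ).mpr h)
      rw [← hc]
      exact Subalgebra.algebraMap_mem _ _
    | succ n ih =>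
      intro b hb
      rcases le_or_gt ((δ b).natDegree) n with h | h
      · exact ih b h
      have hN : (δ b).natDegree = n + 1 := le_antisymm hb h
      rcases eq_or_ne b 0 with rfl | hb0
      · exact zero_mem _
      have hlcb : (δ b).coeff ((δ b).natDegree) ≠ 0 := by
        rw [coeff_natDegree]
        exact leadingCoeff_ne_zero.mpr (delta_ne_zero δ hδ hb0)
      have hdvd : d ∣ (n + 1) := by
        rcases hdpow with hd1 | ⟨p, c, hp, hchar, hdc⟩
        · rw [hd1]; exact one_dvd _
        haveI := Fact.mk hp
        haveI : NeZero p := ⟨hp.ne_zero⟩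
        have hNau : p ^ ((n+1).factorization p) * ((n+1) / p ^ ((n+1).factorization p)) = n+1 :=
          Nat.ordProj_mul_ordCompl_eq_self (n+1) p
        set a := (n+1).factorization p with hadef
        set u := (n+1) / p ^ a with hudef
        have hpu : ¬ p ∣ u := Nat.not_dvd_ordCompl hp (by omega)
        rcases eq_or_ne u 1 with hu1 | hune
        · have hdN : d ≤ n + 1 := by
            have := hmin b (by omega)
            omega
          have hca : c ≤ a := by
            have hle : p ^ c ≤ p ^ a := by
              rw [← hdc]
              rw [hu1, mul_one] at hNau
              omega
            exact (Nat.pow_le_pow_iff_right hp.one_lt).mp hle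
          rw [hdc]
          exact dvd_trans (pow_dvd_pow p hca) ⟨u, hNau.symm⟩
        have hu0 : u ≠ 0 := by intro hz; rw [hz, mul_zero] at hNau; omega
        have hq1 : 1 ≤ p ^ a := Nat.one_le_pow _ _ hp.pos
        have hu2 : 2 ≤ u := (Nat.two_le_iff u).mpr ⟨hu0, hune⟩
        have hqN : p ^ a < n + 1 := by nlinarith
        set q := p ^ a with hqdef
        set i0 := (n + 1) - q with hi0def
        have h7 : (δ ((δ b).coeff i0)).natDegree ≤ q := by
          have h := natDegree_delta_coeff_le hδ b i0
          rw [hN] at h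
          have : (n + 1) - i0 = q := by omega
          rwa [this] at h
        have hch : ((n+1).choose i0 : B) ≠ 0 := by
          have hsym : (n+1).choose i0 = (n+1).choose q := by
            rw [hi0def]
            exact Nat.choose_symm (le_of_lt hqN)
          have hnotdvd : ¬ p ∣ (n+1).choose q := by
            intro hdv
            have h2 : (((n+1).choose q : ℤ) : ZMod p) = ((u : ℤ) : ZMod p) := by
              conv_lhs => rw [← hNau]
              exact choose_pow_mul_cast_zmod p hp a u
            rw [Int.cast_natCast, Int.cast_natCast,
              (ZMod.natCast_eq_zero_iff _ _).mpr hdv] at h2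
            exact hpu ((ZMod.natCast_eq_zero_iff _ _).mp h2.symm)
          intro hz
          apply hnotdvd
          rw [← hsym]
          have hzk : (((n+1).choose i0 : k)) = 0 := by
            apply hFinj
            rw [map_natCast, map_zero, hz]
          exact (CharP.cast_eq_zero_iff k p _).mp hzk
        have h8 := delta_coeff_top hδ b (i := i0) (by omega)
        have h9 : (δ ((δ b).coeff i0)).natDegree = q := by
          apply le_antisymm h7
          apply le_natDegree_of_ne_zero
          rw [show (δ b).natDegree - i0 = q from by rw [hN]; omega] at h8
          rw [h8, hN]
          exact mul_ne_zero hch (by rw [← hN]; exact hlcb)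
        have hciadj : (δ b).coeff i0 ∈ Algebra.adjoin k {x} := ih _ (by omega)
        rw [Algebra.adjoin_singleton_eq_range_aeval] at hciadj
        obtain ⟨g, hg⟩ := hciadj
        have h10 : δ ((δ b).coeff i0) = aeval (δ x) g := by
          rw [← hg, aeval_algHom_apply]
          rfl
        have hg0 : g ≠ 0 := by
          intro hz
          rw [hz, map_zero] at h10
          rw [h10] at h9
          simp only [natDegree_zero] at h9
          omega
        have hup : q ≤ g.natDegree * d := by
          rw [← h9, h10, ← hx]
          exact natDegree_aeval_le g (δ x)
        have hlow : g.natDegree * d ≤ q := by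
          rw [← h9]
          apply le_natDegree_of_ne_zero
          rw [h10]
          rw [show g.natDegree * d = g.natDegree * (δ x).natDegree from by rw [hx]]
          rw [coeff_aeval_top g (δ x) g.natDegree le_rfl hdxdeg]
          refine mul_ne_zero (fun hzz => ?_) (pow_ne_zero _ (leadingCoeff_ne_zero.mpr hdx0))
          exact (leadingCoeff_ne_zero.mpr hg0) (hFinj (by rw [← coeff_natDegree, hzz, map_zero]))
        have hqe : q = g.natDegree * d := le_antisymm hup hlow
        exact dvd_trans ⟨g.natDegree, by rw [hqe, mul_comm]⟩ ⟨u, hNau.symm⟩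
      obtain ⟨m, hm⟩ := hdvd
      obtain ⟨lam, hlam⟩ := hinvk _ (coeff_natDegree_mem_expInv hδ b)
      set s := algebraMap k B (lam / mu ^ m) with hs
      have hkey : δ (s * x ^ m) = C s * (δ x) ^ m := by
        rw [map_mul, map_pow]
        congr 1
        rw [hs, AlgHom.commutes, Polynomial.algebraMap_apply]
      have hcoeffN : (δ (b - s * x ^ m)).coeff (n+1) = 0 := by
        rw [map_sub, coeff_sub, hkey, coeff_C_mul]
        have hA : (δ b).coeff (n+1) = algebraMap k B lam := by
          rw [← hN, ← hlam]
        have hB : ((δ x) ^ m).coeff (n+1) = (algebraMap k B mu) ^ m := by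
          have hcp := coeff_pow_mul_natDegree (δ x) m
          rw [hx] at hcp
          rw [show n + 1 = m * d from by rw [hm, Nat.mul_comm], hcp, hmu']
        rw [hA, hB, hs, ← map_pow, ← map_mul, div_mul_cancel₀ lam (pow_ne_zero m hmu0),
          sub_self]
      have hble : (δ (b - s * x ^ m)).natDegree ≤ n + 1 := by
        rw [map_sub]
        apply le_trans (natDegree_sub_le _ _)
        apply max_le (by omega)
        rw [hkey]
        apply le_trans natDegree_mul_le
        rw [natDegree_C, zero_add, natDegree_pow, hx]
        exact le_of_eq (by rw [hm, Nat.mul_comm])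
      have hble' : (δ (b - s * x ^ m)).natDegree ≤ n := by
        rcases eq_or_lt_of_le hble with he | hlt
        · have hz : δ (b - s * x ^ m) = 0 := by
            apply leadingCoeff_eq_zero.mp
            rw [← coeff_natDegree, he]
            exact hcoeffN
          rw [hz]
          simp
        · omega
      have hrepr : b = (b - s * x ^ m) + s * x ^ m := by ring
      rw [hrepr]
      exact add_mem (ih _ hble')
        (mul_mem (Subalgebra.algebraMap_mem _ _)
          (pow_mem (Algebra.self_mem_adjoin_singleton k x) m))
  -- conclude
  have hxtr : Transcendental k x := by
    intro halg
    obtain ⟨c, hc⟩ := hac x halg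
    have : δ x = C x := by
      rw [← hc, AlgHom.commutes, Polynomial.algebraMap_apply]
    rw [this] at hx
    simp only [natDegree_C] at hx
    omega
  have hinj : Function.Injective (Polynomial.aeval x : k[X] →ₐ[k] B) := by
    rw [injective_iff_map_eq_zero]
    intro g hg
    by_contra hgne
    exact hxtr ⟨g, hgne, hg⟩
  have hsurj : Function.Surjective (Polynomial.aeval x : k[X] →ₐ[k] B) := by
    intro b
    have := main ((δ b).natDegree) b le_rfl
    rwa [Algebra.adjoin_singleton_eq_range_aeval] at this
  exact ⟨(AlgEquiv.ofBijective (Polynomial.aeval x : k[X] →ₐ[k] B) ⟨hinj, hsurj⟩).symm⟩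


lemma algHom_ext_gen (e : B ≃ₐ[k] k[X]) {R : Type} [Semiring R] [Algebra k R]
    {f g : B →ₐ[k] R} (h : f (e.symm X) = g (e.symm X)) : f = g := by
  have h2 : f.comp e.symm.toAlgHom = g.comp e.symm.toAlgHom :=
    Polynomial.algHom_ext (by simpa using h)
  ext b
  have h3 := congrArg (fun F : k[X] →ₐ[k] R => F (e b)) h2
  simpa using h3

/-- The translation exponential map transported from k[X]. -/
noncomputable def transExp (e : B ≃ₐ[k] k[X]) : B →ₐ[k] B[X] :=
  (Polynomial.mapAlgHom e.symm.toAlgHom).comp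
    ((Polynomial.aeval (C X + X : (k[X])[X])).comp e.toAlgHom)

lemma transExp_gen (e : B ≃ₐ[k] k[X]) :
    transExp e (e.symm X) = C (e.symm X) + X := by
  simp [transExp, coe_mapAlgHom, Polynomial.map_add]

lemma transExp_isExpMap (e : B ≃ₐ[k] k[X]) : IsExpMap k B (transExp e) := by
  set δ := transExp e with hδdef
  have hy : δ (e.symm X) = C (e.symm X) + X := transExp_gen e
  constructor
  · -- eval at 0
    have E0 : B[X] →ₐ[k] B := (Polynomial.aeval (0 : B)).restrictScalars k
    have hcomp : ((Polynomial.aeval (0 : B)).restrictScalars k (S := B)).comp δ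
        = AlgHom.id k B := by
      apply algHom_ext_gen e
      rw [AlgHom.comp_apply, hy]
      simp
    intro b
    have h5 := congrArg (fun F : B →ₐ[k] B => F b) hcomp
    simp only [AlgHom.comp_apply, AlgHom.coe_restrictScalars', AlgHom.id_apply] at h5
    calc (δ b).eval 0 = (Polynomial.aeval (0 : B)) (δ b) := by rw [coe_aeval_eq_eval]
      _ = b := h5
  · -- comultiplication
    have hcommutes : ∀ c : k, Polynomial.eval₂RingHom
        ((C : B[X] →+* (B[X])[X]).comp (C : B →+* B[X])) (C X + X)
          (algebraMap k B[X] c) = algebraMap k ((B[X])[X]) c := by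
      intro c
      simp only [Polynomial.algebraMap_apply, coe_eval₂RingHom, eval₂_C, RingHom.comp_apply]
    set E2 : B[X] →ₐ[k] (B[X])[X] :=
      { Polynomial.eval₂RingHom ((C : B[X] →+* (B[X])[X]).comp (C : B →+* B[X])) (C X + X) with
        commutes' := hcommutes } with hE2
    have hmain : ((Polynomial.mapAlgHom δ).comp δ) = E2.comp δ := by
      apply algHom_ext_gen e
      rw [AlgHom.comp_apply, AlgHom.comp_apply, hy]
      have hy' : (δ : B →+* B[X]) (e.symm X) = C (e.symm X) + X := hy
      rw [coe_mapAlgHom, Polynomial.map_add, map_C, map_X, hy']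
      have : E2 (C (e.symm X) + X) = C (C (e.symm X)) + (C X + X) := by
        rw [hE2]
        simp only [AlgHom.coe_mk, coe_eval₂RingHom]
        rw [eval₂_add, eval₂_C, eval₂_X]
        rfl
      rw [this, map_add]
      ring
    intro b
    have := congrArg (fun F : B →ₐ[k] (B[X])[X] => F b) hmain
    simp only [AlgHom.comp_apply] at this
    rw [show (δ b).map δ.toRingHom = (Polynomial.mapAlgHom δ) (δ b) from rfl, this, hE2]
    rfl

lemma transExp_nontrivial (e : B ≃ₐ[k] k[X]) :
    ∃ y : B, transExp e y ≠ C y := by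
  refine ⟨e.symm X, ?_⟩
  rw [transExp_gen e]
  intro h
  have := congrArg (fun P : B[X] => P.coeff 1) h
  simp at this

lemma ML_eq_top_of_all_trivial
    (hall : ∀ δ : B →ₐ[k] B[X], IsExpMap k B δ → IsTrivialExp k B δ) :
    ML k B = ⊤ := by
  rw [eq_top_iff, ML]
  refine le_iInf₂ fun δ hδ => ?_
  intro b _
  rw [mem_expInv_iff]
  exact hall δ hδ b

end MLRig

theorem ML_trdeg_one (h1 : HasTrdeg k B 1)
    (hac : ∀ b : B, IsAlgebraic k b → b ∈ Set.range (algebraMap k B)) :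
    (ML k B = ⊥ ↔ Nonempty (B ≃ₐ[k] k[X])) ∧
    (¬ Nonempty (B ≃ₐ[k] k[X]) → ML k B = ⊤) := by
  have hstep : ∀ (δ : B →ₐ[k] B[X]), IsExpMap k B δ → (∃ y, δ y ≠ C y) →
      Nonempty (B ≃ₐ[k] k[X]) := fun δ hδ hnt => MLRig.equiv_of_nontrivial hδ hnt h1 hac
  constructor
  · constructor
    · intro hml
      by_cases hall : ∀ δ : B →ₐ[k] B[X], IsExpMap k B δ → IsTrivialExp k B δ
      · exfalso
        have htop := MLRig.ML_eq_top_of_all_trivial hall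
        rw [hml] at htop
        obtain ⟨x, hx⟩ := h1
        have htr := hx.1.transcendental 0
        have hmem : x 0 ∈ (⊥ : Subalgebra k B) := by rw [htop]; exact Algebra.mem_top
        rw [Algebra.mem_bot] at hmem
        obtain ⟨c, hc⟩ := hmem
        exact htr (by rw [← hc]; exact isAlgebraic_algebraMap c)
      · push_neg at hall
        obtain ⟨δ, hδ, hnt⟩ := hall
        simp only [IsTrivialExp, not_forall] at hnt
        exact hstep δ hδ hnt
    · rintro ⟨e⟩
      have hbot := MLRig.expInv_eq_bot (MLRig.transExp_isExpMap e)
        (MLRig.transExp_nontrivial e) h1 hac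
      apply le_antisymm _ bot_le
      refine le_trans ?_ (le_of_eq hbot)
      exact iInf₂_le (MLRig.transExp e) (MLRig.transExp_isExpMap e)
  · intro hne
    apply MLRig.ML_eq_top_of_all_trivial
    intro δ hδ
    by_contra h
    simp only [IsTrivialExp, not_forall] at h
    exact hne (hstep δ hδ h)
end

section
/- Let B be a k-domain with tr.deg_k B = 1. Then ML(B) = ML*(B). In particular, every nontrivial exponential map on such B has a slice. -/
open Polynomial

variable (k : Type) [Field k] (B : Type) [CommRing B] [IsDomain B] [Algebra k B]

theorem coeff_sum_C_mul_X_pow {R : Type*} [CommRing R] (t : ℕ → R) (n j : ℕ) :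
    (∑ i ∈ Finset.range n, C (t i) * X ^ i).coeff j = if j < n then t j else 0 := by
  rw [Polynomial.finset_sum_coeff]
  simp only [Polynomial.coeff_C_mul, Polynomial.coeff_X_pow, mul_ite, mul_one, mul_zero]
  rw [Finset.sum_ite_eq (Finset.range n) j t]
  simp [Finset.mem_range]

noncomputable def PhiHom (u v : B) : Polynomial (Polynomial k) →+* B :=
  (Polynomial.evalRingHom v).comp (Polynomial.mapRingHom (Polynomial.aeval u).toRingHom)

theorem PhiHom_apply (u v : B) (P : Polynomial (Polynomial k)) :
    PhiHom k B u v P = ((P.map (Polynomial.aeval u).toRingHom).eval v) := rfl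

theorem phi_sum (u v : B) (t : ℕ → k[X]) (n : ℕ) :
    PhiHom k B u v (∑ j ∈ Finset.range n, C (t j) * X ^ j)
      = ∑ j ∈ Finset.range n, Polynomial.aeval u (t j) * v ^ j := by
  rw [map_sum]
  refine Finset.sum_congr rfl fun j _ => ?_
  simp [PhiHom_apply, Polynomial.map_mul, Polynomial.map_pow, Polynomial.map_C, Polynomial.map_X]

theorem exists_rel (u v : B) (c : ℕ → B) (n : ℕ)
    (hmem : ∀ j, j ≤ n → ∃ q : k[X], Polynomial.aeval u q = c j)
    (hsum : ∑ j ∈ Finset.range (n + 1), c j * v ^ j = 0)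
    (j0 : ℕ) (hj0 : j0 ≤ n) (hc : c j0 ≠ 0) :
    ∃ P : Polynomial (Polynomial k), P ≠ 0 ∧ PhiHom k B u v P = 0 := by
  classical
  choose q hq using hmem
  set t : ℕ → k[X] := fun j => if h : j ≤ n then q j h else 0 with ht
  have htj : ∀ j, j ≤ n → Polynomial.aeval u (t j) = c j := by
    intro j hj; simp only [ht, dif_pos hj]; exact hq j hj
  refine ⟨∑ j ∈ Finset.range (n + 1), C (t j) * X ^ j, ?_, ?_⟩
  · intro h0
    have h1 : (∑ j ∈ Finset.range (n + 1), C (t j) * X ^ j).coeff j0 = t j0 := by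
      rw [coeff_sum_C_mul_X_pow]; simp [Nat.lt_succ_of_le hj0]
    rw [h0, Polynomial.coeff_zero] at h1
    apply hc
    rw [← htj j0 hj0, ← h1, map_zero]
  · rw [phi_sum]
    rw [← hsum]
    refine Finset.sum_congr rfl fun j hj => ?_
    rw [htj j (Nat.lt_succ_iff.mp (Finset.mem_range.mp hj))]

noncomputable def tauHom : Polynomial (Polynomial k) →+* Polynomial (Polynomial k) :=
  Polynomial.eval₂RingHom
    (Polynomial.eval₂RingHom ((C : k[X] →+* Polynomial (Polynomial k)).comp (C : k →+* k[X])) X)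
    (C X)

theorem tauHom_C_C (c : k) : tauHom k (C (C c)) = C (C c) := by
  simp [tauHom]

theorem tauHom_C_X : tauHom k (C (X : k[X])) = X := by
  simp [tauHom]

theorem tauHom_X : tauHom k (X : Polynomial (Polynomial k)) = C X := by
  simp [tauHom]

theorem tauHom_tauHom (P : Polynomial (Polynomial k)) : tauHom k (tauHom k P) = P := by
  have hC : ∀ q : k[X], tauHom k (tauHom k (C q)) = C q := by
    have h2 : ((tauHom k).comp (tauHom k)).comp (C : k[X] →+* Polynomial (Polynomial k))
        = (C : k[X] →+* Polynomial (Polynomial k)) := by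
      apply Polynomial.ringHom_ext
      · intro c
        simp [tauHom_C_C]
      · simp [tauHom_C_X, tauHom_X]
    exact fun q => RingHom.congr_fun h2 q
  have h : (tauHom k).comp (tauHom k) = RingHom.id _ := by
    apply Polynomial.ringHom_ext
    · exact hC
    · simp [tauHom_X, tauHom_C_X]
  exact RingHom.congr_fun h P

theorem phi_tau (u v : B) (P : Polynomial (Polynomial k)) :
    PhiHom k B u v (tauHom k P) = PhiHom k B v u P := by
  have h : (PhiHom k B u v).comp (tauHom k) = PhiHom k B v u := by
    apply Polynomial.ringHom_ext
    · intro q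
      have h2 : ((PhiHom k B u v).comp (tauHom k)).comp (C : k[X] →+* Polynomial (Polynomial k))
          = (PhiHom k B v u).comp (C : k[X] →+* Polynomial (Polynomial k)) := by
        apply Polynomial.ringHom_ext
        · intro c
          simp [tauHom_C_C, PhiHom_apply]
        · simp [tauHom_C_X, PhiHom_apply]
      exact RingHom.congr_fun h2 q
    · simp [tauHom_X, PhiHom_apply]
  exact RingHom.congr_fun h P

theorem core (δ : B →ₐ[k] B[X]) {a b : B} (ha : δ a = C a)
    (hb : 0 < (δ b).degree) (hta : Transcendental k a)
    (P : Polynomial (Polynomial k)) (hP : PhiHom k B a b P = 0) : P = 0 := by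
  set M : B[X] := P.map (Polynomial.aeval a).toRingHom with hM
  have h2 : ∀ j, δ (M.coeff j) = C (M.coeff j) := by
    intro j
    rw [hM, Polynomial.coeff_map]
    show δ (Polynomial.aeval a (P.coeff j)) = C (Polynomial.aeval a (P.coeff j))
    rw [← Polynomial.aeval_algHom_apply δ a (P.coeff j), ha]
    exact Polynomial.aeval_algHom_apply (CAlgHom : B →ₐ[k] B[X]) a (P.coeff j)
  have e2 : M.map δ.toRingHom = M.map (C : B →+* B[X]) := by
    ext j
    simp [Polynomial.coeff_map, h2 j]
  have h3 : Polynomial.aeval ((δ b) : B[X]) M = 0 := by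
    have e1 : Polynomial.eval₂ δ.toRingHom (δ.toRingHom b) M = δ.toRingHom (M.eval b) :=
      Polynomial.eval₂_at_apply δ.toRingHom b
    have hM0 : M.eval b = 0 := hP
    rw [Polynomial.aeval_def, Polynomial.algebraMap_eq, ← Polynomial.eval_map, ← e2,
      Polynomial.eval_map]
    show Polynomial.eval₂ δ.toRingHom (δ.toRingHom b) M = 0
    rw [e1, hM0, map_zero]
  have htb : Transcendental B ((δ b) : B[X]) := by
    apply Polynomial.transcendental
    · exact (Polynomial.natDegree_pos_iff_degree_pos.mpr hb).ne'
    · exact mem_nonZeroDivisors_of_ne_zero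
        (Polynomial.leadingCoeff_ne_zero.mpr (fun h => by simp [h] at hb))
  have h4 : M = 0 := by
    by_contra hM0
    exact htb ⟨M, hM0, h3⟩
  have hinj : Function.Injective (Polynomial.aeval a : k[X] →ₐ[k] B) :=
    transcendental_iff_injective.mp hta
  rwa [hM, Polynomial.map_eq_zero_iff hinj] at h4

theorem lead_invariant (δ : B →ₐ[k] B[X]) (hδ : IsExpMap k B δ) {x : B}
    (hp : δ x ≠ 0) :
    δ ((δ x).coeff (δ x).natDegree) = C ((δ x).coeff (δ x).natDegree) := by
  set p := δ x with hpdef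
  set n := p.natDegree with hn
  have hcomm := hδ.2 x
  have hL := congrArg (fun q => Polynomial.coeff q n) hcomm
  simp only [← hpdef, Polynomial.coeff_map] at hL
  have hR : (p.eval₂ ((C : B[X] →+* Polynomial B[X]).comp (C : B →+* B[X]))
      (C X + X)).coeff n = C (p.coeff n) := by
    rw [Polynomial.eval₂_eq_sum, Polynomial.sum_def, Polynomial.finset_sum_coeff]
    rw [Finset.sum_eq_single n]
    · rw [RingHom.comp_apply, Polynomial.coeff_C_mul]
      have hone : ((C (X : B[X]) + X) ^ n).coeff n = 1 := by
        rw [add_comm]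
        have hm : ((X : Polynomial B[X]) + C (X : B[X])).Monic := Polynomial.monic_X_add_C _
        have hdeg : (((X : Polynomial B[X]) + C (X : B[X])) ^ n).natDegree = n := by
          rw [hm.natDegree_pow, Polynomial.natDegree_X_add_C, mul_one]
        have := (hm.pow n).coeff_natDegree
        rwa [hdeg] at this
      rw [hone, mul_one]
    · intro i hi hne
      rw [RingHom.comp_apply, Polynomial.coeff_C_mul]
      have hlt : i < n := lt_of_le_of_ne (Polynomial.le_natDegree_of_mem_supp i hi) hne
      have : ((C (X : B[X]) + X) ^ i).coeff n = 0 := by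
        apply Polynomial.coeff_eq_zero_of_natDegree_lt
        calc ((C (X : B[X]) + X) ^ i).natDegree ≤ i * (C (X : B[X]) + X).natDegree :=
              Polynomial.natDegree_pow_le
        _ ≤ i * 1 := by
              apply Nat.mul_le_mul_left
              rw [add_comm, Polynomial.natDegree_X_add_C]
        _ < n := by omega
      rw [this, mul_zero]
    · intro hns
      rw [Polynomial.notMem_support_iff.mp hns]
      simp
  rw [hR] at hL
  exact hL

theorem helper_isAlg {K F : Type*} [Field K] [Field F] [Algebra K F]
    (E : IntermediateField K F) (N : F[X]) (hN : N ≠ 0)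
    (hc : ∀ j, N.coeff j ∈ E) {z : F} (hz : N.eval z = 0) : IsAlgebraic E z := by
  classical
  set Q : Polynomial E := ∑ j ∈ Finset.range (N.natDegree + 1), C (⟨N.coeff j, hc j⟩ : E) * X ^ j
    with hQ
  have hmap : Q.map (algebraMap E F) = N := by
    ext j
    rw [Polynomial.coeff_map, hQ, coeff_sum_C_mul_X_pow]
    by_cases hj : j < N.natDegree + 1
    · simp [hj]
    · simp only [hj, if_false, map_zero]
      exact (Polynomial.coeff_eq_zero_of_natDegree_lt (by omega)).symm
  refine ⟨Q, fun h => hN (by rw [← hmap, h, Polynomial.map_zero]), ?_⟩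
  rw [Polynomial.aeval_def, ← Polynomial.eval_map, hmap, hz]

theorem isUnit_of_algebraic {a : B} (ha : a ≠ 0) (halg : IsAlgebraic k a) : IsUnit a := by
  obtain ⟨p, hp0, hpa⟩ := halg
  have H : ∀ m : ℕ, ∀ p : k[X], p.natDegree ≤ m → p ≠ 0 → Polynomial.aeval a p = 0 → IsUnit a := by
    intro m
    induction m with
    | zero =>
      intro p hd hp0 hpa
      exfalso
      have : p = C (p.coeff 0) := Polynomial.eq_C_of_natDegree_le_zero hd
      rw [this, Polynomial.aeval_C] at hpa
      have hc0 : p.coeff 0 = 0 := by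
        have hinj : Function.Injective (algebraMap k B) := (algebraMap k B).injective
        exact hinj (by rw [hpa, map_zero])
      exact hp0 (by rw [this, hc0, map_zero])
    | succ m ih =>
      intro p hd hp0 hpa
      have hsplit : Polynomial.aeval a p.divX * a + algebraMap k B (p.coeff 0) = 0 := by
        rw [← hpa]
        conv_rhs => rw [← p.divX_mul_X_add]
        rw [map_add, map_mul, Polynomial.aeval_X, Polynomial.aeval_C]
      by_cases h0 : p.coeff 0 = 0
      · have hdx : Polynomial.aeval a p.divX * a = 0 := by
          rwa [h0, map_zero, add_zero] at hsplit
        have h2 : Polynomial.aeval a p.divX = 0 := by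
          rcases mul_eq_zero.mp hdx with h | h
          · exact h
          · exact absurd h ha
        have hdx0 : p.divX ≠ 0 := by
          intro h
          apply hp0
          have := p.divX_mul_X_add
          rw [h, h0, map_zero, zero_mul, zero_add] at this
          exact this.symm
        have hlt : p.divX.natDegree ≤ m := by
          have h5 := Polynomial.natDegree_divX_eq_natDegree_tsub_one (p := p)
          omega
        exact ih p.divX hlt hdx0 h2
      · refine isUnit_iff_exists_inv.mpr
          ⟨Polynomial.aeval a p.divX * algebraMap k B (-(p.coeff 0)⁻¹), ?_⟩
        have h1 : Polynomial.aeval a p.divX * a = - algebraMap k B (p.coeff 0) := by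
          linear_combination hsplit
        calc a * (Polynomial.aeval a p.divX * algebraMap k B (-(p.coeff 0)⁻¹))
            = (Polynomial.aeval a p.divX * a) * algebraMap k B (-(p.coeff 0)⁻¹) := by ring
        _ = (- algebraMap k B (p.coeff 0)) * algebraMap k B (-(p.coeff 0)⁻¹) := by rw [h1]
        _ = algebraMap k B (p.coeff 0 * (p.coeff 0)⁻¹) := by rw [map_neg, neg_mul_neg, map_mul]
        _ = 1 := by rw [mul_inv_cancel₀ h0, map_one]
  exact H p.natDegree p le_rfl hp0 hpa

theorem exists_localSlice (δ : B →ₐ[k] B[X]) (hδ : IsExpMap k B δ)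
    (hnt : ¬ ∀ b : B, δ b = C b) : ∃ x : B, IsLocalSlice k B δ x := by
  classical
  have hex : ∃ n : ℕ, ∃ y, 0 < (δ y).degree ∧ (δ y).natDegree = n := by
    obtain ⟨b0, hb0⟩ := not_forall.mp hnt
    refine ⟨(δ b0).natDegree, b0, ?_, rfl⟩
    by_contra hle
    have hC : δ b0 = C ((δ b0).coeff 0) := Polynomial.eq_C_of_degree_le_zero (not_lt.mp hle)
    have h0 := hδ.1 b0
    rw [hC, Polynomial.eval_C] at h0
    exact hb0 (by rw [hC, h0])
  obtain ⟨y0, hy0pos, hy0deg⟩ := Nat.find_spec hex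
  refine ⟨y0, hy0pos, ?_⟩
  intro y hy
  have hne0 : δ y0 ≠ 0 := fun h => by rw [h, Polynomial.degree_zero] at hy0pos; exact not_lt_bot hy0pos
  have hne1 : δ y ≠ 0 := fun h => by rw [h, Polynomial.degree_zero] at hy; exact not_lt_bot hy
  have h1 : (δ y0).natDegree ≤ (δ y).natDegree := by
    rw [hy0deg]
    exact Nat.find_min' hex ⟨y, hy, rfl⟩
  rw [Polynomial.degree_eq_natDegree hne0, Polynomial.degree_eq_natDegree hne1]
  exact_mod_cast h1

theorem invariant_isAlgebraic (h1 : ∃ x : Fin 1 → B, IsTranscendenceBasis k x)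
    (δ : B →ₐ[k] B[X]) {a b : B} (ha : δ a = C a) (hb : 0 < (δ b).degree) :
    IsAlgebraic k a := by
  classical
  by_contra hta
  obtain ⟨x, hx⟩ := h1
  set x0 : B := x 0 with hx0
  have hxall : ∀ i : Fin 1, x i = x0 := fun i => by rw [Subsingleton.elim i 0]
  have hrange : Set.range x = {x0} := by
    ext y
    constructor
    · rintro ⟨i, rfl⟩; simp [hxall i]
    · intro hy; exact ⟨0, by simpa using hy.symm⟩
  have htx : Transcendental k x0 := hx.1.transcendental 0
  haveI halgB : Algebra.IsAlgebraic (Algebra.adjoin k (Set.range x)) B := hx.isAlgebraic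
  set K0 := Algebra.adjoin k (Set.range x) with hK0def
  have hK0 : K0 = Algebra.adjoin k {x0} := by rw [hK0def, hrange]
  -- extract a relation P1 with Φ x0 a P1 = 0
  have hrel : ∀ z : B, z ≠ 0 → ∃ P : Polynomial (Polynomial k), P ≠ 0 ∧ PhiHom k B x0 z P = 0 := by
    intro z hz
    obtain ⟨W, hW0, hWz⟩ := halgB.isAlgebraic z
    have hmem : ∀ j, (j : ℕ) ≤ W.natDegree → ∃ q : k[X],
        Polynomial.aeval x0 q = ((W.coeff j : K0) : B) := by
      intro j _
      have h2 : ((W.coeff j : K0) : B) ∈ Algebra.adjoin k {x0} := by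
        rw [← hK0]; exact (W.coeff j).2
      rw [Algebra.adjoin_singleton_eq_range_aeval] at h2
      obtain ⟨q, hq⟩ := h2
      exact ⟨q, hq⟩
    have hsum : ∑ j ∈ Finset.range (W.natDegree + 1), ((W.coeff j : K0) : B) * z ^ j = 0 := by
      have := hWz
      rw [Polynomial.aeval_eq_sum_range] at this
      rw [← this]
      refine Finset.sum_congr rfl fun j _ => ?_
      rw [Algebra.smul_def]
      rfl
    have hcne : ((W.coeff W.natDegree : K0) : B) ≠ 0 := by
      intro h
      exact hW0 (Polynomial.leadingCoeff_eq_zero.mp (by exact_mod_cast h))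
    exact exists_rel k B x0 z (fun j => ((W.coeff j : K0) : B)) W.natDegree hmem hsum
      W.natDegree le_rfl hcne
  have hane : a ≠ 0 := by
    intro h
    exact hta (h ▸ isAlgebraic_zero)
  obtain ⟨P1, hP1ne, hP1Φ⟩ := hrel a hane
  -- swap to get a relation with coefficients in k[a] satisfied by x0
  set P2 := tauHom k P1 with hP2def
  have hP2ne : P2 ≠ 0 := fun h => hP1ne (by rw [← tauHom_tauHom k P1, ← hP2def, h, map_zero])
  have hP2Φ : PhiHom k B a x0 P2 = 0 := by rw [hP2def, phi_tau]; exact hP1Φ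
  have hainj : Function.Injective (Polynomial.aeval a : k[X] →ₐ[k] B) :=
    transcendental_iff_injective.mp hta
  set N2 : B[X] := P2.map (Polynomial.aeval a).toRingHom with hN2def
  have hN2e : N2.eval x0 = 0 := hP2Φ
  have hN2ne : N2 ≠ 0 := fun h => hP2ne ((Polynomial.map_eq_zero_iff hainj).mp h)
  -- pass to the fraction field
  let F := FractionRing B
  set f : B →ₐ[k] F := IsScalarTower.toAlgHom k B F with hfdef
  have hf : Function.Injective f := by
    simpa [hfdef] using IsFractionRing.injective B F
  set af := f a with hafdef
  set xf := f x0 with hxfdef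
  set bf := f b with hbfdef
  have htaF : Transcendental k af := by
    have : af = algebraMap B F a := rfl
    rw [this]
    exact (transcendental_algebraMap_iff (IsFractionRing.injective B F)).mpr hta
  set Ea := IntermediateField.adjoin k {af} with hEadef
  -- xf is algebraic over Ea
  have hxfE : IsAlgebraic Ea xf := by
    apply helper_isAlg Ea (N2.map (f : B →+* F))
    · exact fun h => hN2ne ((Polynomial.map_eq_zero_iff hf).mp h)
    · intro j
      rw [Polynomial.coeff_map]
      have h8 : N2.coeff j = Polynomial.aeval a (P2.coeff j) := by
        rw [hN2def, Polynomial.coeff_map]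
        rfl
      have h9 : (f : B →+* F) (N2.coeff j) = Polynomial.aeval af (P2.coeff j) := by
        rw [h8]
        exact (Polynomial.aeval_algHom_apply f a (P2.coeff j)).symm
      rw [h9]
      exact IntermediateField.algebra_adjoin_le_adjoin k {af}
        (Polynomial.aeval_mem_adjoin_singleton k af)
    · show Polynomial.eval ((f : B →+* F) x0) (N2.map (f : B →+* F)) = 0
      rw [Polynomial.eval_map, Polynomial.eval₂_at_apply, hN2e, map_zero]
  haveI hfd : FiniteDimensional Ea (IntermediateField.adjoin Ea {xf}) :=
    IntermediateField.adjoin.finiteDimensional (isAlgebraic_iff_isIntegral.mp hxfE)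
  set Exa := IntermediateField.adjoin Ea {xf} with hExadef
  -- bf is algebraic over Exa
  obtain ⟨W2, hW20, hW2b⟩ := halgB.isAlgebraic b
  set N3 : B[X] := W2.map (algebraMap K0 B) with hN3def
  have hN3ne : N3 ≠ 0 := fun h =>
    hW20 ((Polynomial.map_eq_zero_iff Subtype.val_injective).mp h)
  have hN3e : N3.eval b = 0 := by
    rw [hN3def, Polynomial.eval_map, ← Polynomial.aeval_def, hW2b]
  have hbfE : IsAlgebraic Exa bf := by
    apply helper_isAlg Exa (N3.map (f : B →+* F))
    · exact fun h => hN3ne ((Polynomial.map_eq_zero_iff hf).mp h)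
    · intro j
      rw [Polynomial.coeff_map]
      have h2 : (N3.coeff j) ∈ Algebra.adjoin k {x0} := by
        rw [← hK0, hN3def, Polynomial.coeff_map]
        exact (W2.coeff j).2
      rw [Algebra.adjoin_singleton_eq_range_aeval] at h2
      obtain ⟨q, hq⟩ := h2
      have h9 : (f : B →+* F) (N3.coeff j) = Polynomial.aeval xf q := by
        rw [← hq]
        exact (Polynomial.aeval_algHom_apply f x0 q).symm
      rw [h9]
      have h3 : Polynomial.aeval xf (q.map (algebraMap k ↥Ea)) = Polynomial.aeval xf q := by
        rw [Polynomial.aeval_def, Polynomial.aeval_def, Polynomial.eval₂_map,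
          ← IsScalarTower.algebraMap_eq k ↥Ea F]
      rw [← h3]
      exact IntermediateField.algebra_adjoin_le_adjoin Ea {xf}
        (Polynomial.aeval_mem_adjoin_singleton Ea xf)
    · show Polynomial.eval ((f : B →+* F) b) (N3.map (f : B →+* F)) = 0
      rw [Polynomial.eval_map, Polynomial.eval₂_at_apply, hN3e, map_zero]
  -- transitivity: bf algebraic over Ea
  have hbEa : IsAlgebraic Ea bf := by
    haveI : Algebra.IsIntegral Ea Exa := Algebra.IsIntegral.of_finite Ea Exa
    exact (isIntegral_trans bf (isAlgebraic_iff_isIntegral.mp hbfE)).isAlgebraic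
  -- extract a two-variable relation over k between a and b
  obtain ⟨Q, hQ0, hQb⟩ := hbEa
  set n := Q.natDegree with hn
  have hrep : ∀ j : ℕ, ∃ r s : k[X], Polynomial.aeval af s ≠ 0 ∧
      ((Q.coeff j : Ea) : F) * Polynomial.aeval af s = Polynomial.aeval af r := by
    intro j
    have hmem : ((Q.coeff j : Ea) : F) ∈ Ea := (Q.coeff j).2
    have hmem2 : ((Q.coeff j : Ea) : F) ∈ IntermediateField.adjoin k {af} := hmem
    rw [IntermediateField.mem_adjoin_simple_iff] at hmem2
    obtain ⟨r, s, hrs⟩ := hmem2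
    by_cases hs : Polynomial.aeval af s = 0
    · refine ⟨0, 1, ?_, ?_⟩
      · simp
      · rw [hrs, hs, div_zero, zero_mul, map_zero]
    · exact ⟨r, s, hs, by rw [hrs, div_mul_cancel₀ _ hs]⟩
  choose r s hs hrs using hrep
  set D : k[X] := ∏ i ∈ Finset.range (n + 1), s i with hD
  have hDne : Polynomial.aeval af D ≠ 0 := by
    rw [hD, map_prod]
    exact Finset.prod_ne_zero_iff.mpr fun i _ => hs i
  set t : ℕ → k[X] := fun j => r j * ∏ i ∈ (Finset.range (n + 1)).erase j, s i with htdef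
  have key : ∀ j ∈ Finset.range (n + 1),
      ((Q.coeff j : Ea) : F) * Polynomial.aeval af D = Polynomial.aeval af (t j) := by
    intro j hj
    have hDsplit : D = s j * ∏ i ∈ (Finset.range (n + 1)).erase j, s i :=
      (Finset.mul_prod_erase _ _ hj).symm
    rw [hDsplit, map_mul, ← mul_assoc, hrs j, htdef, ← map_mul]
  have hsumF : ∑ j ∈ Finset.range (n + 1), ((Q.coeff j : Ea) : F) * bf ^ j = 0 := by
    have h5 := hQb
    rw [Polynomial.aeval_eq_sum_range] at h5
    rw [← h5]
    refine Finset.sum_congr rfl fun j _ => ?_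
    rw [Algebra.smul_def]
    rfl
  have hsumF2 : ∑ j ∈ Finset.range (n + 1), Polynomial.aeval af (t j) * bf ^ j = 0 := by
    have h6 : ∀ j ∈ Finset.range (n + 1),
        Polynomial.aeval af (t j) * bf ^ j
          = (((Q.coeff j : Ea) : F) * bf ^ j) * Polynomial.aeval af D := by
      intro j hj
      rw [← key j hj]
      ring
    rw [Finset.sum_congr rfl h6, ← Finset.sum_mul, hsumF, zero_mul]
  have hsumB : ∑ j ∈ Finset.range (n + 1), Polynomial.aeval a (t j) * b ^ j = 0 := by
    apply hf
    rw [map_sum, map_zero]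
    refine (Finset.sum_congr rfl fun j _ => ?_).trans hsumF2
    rw [map_mul, map_pow]
    congr 1
    exact (Polynomial.aeval_algHom_apply f a (t j)).symm
  have hcn : Polynomial.aeval a (t n) ≠ 0 := by
    intro h
    have h7 : Polynomial.aeval af (t n) = 0 := by
      have h10 := Polynomial.aeval_algHom_apply f a (t n)
      rw [h, map_zero] at h10
      exact h10
    rw [← key n (Finset.self_mem_range_succ n)] at h7
    have h8 : ((Q.coeff n : Ea) : F) ≠ 0 := by
      intro h9
      exact hQ0 (Polynomial.leadingCoeff_eq_zero.mp (by exact_mod_cast h9))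
    exact (mul_ne_zero h8 hDne) h7
  obtain ⟨P, hPne, hPΦ⟩ := exists_rel k B a b (fun j => Polynomial.aeval a (t j)) n
    (fun j _ => ⟨t j, rfl⟩) hsumB n le_rfl hcn
  exact hPne (core k B δ ha hb hta P hPΦ)

theorem ML_eq_MLstar_trdeg_one (h1 : HasTrdeg k B 1) :
    ML k B = MLstar k B ∧
    ∀ δ : B →ₐ[k] B[X], IsExpMap k B δ → ¬ IsTrivialExp k B δ → HasSlice k B δ := by
  classical
  have main : ∀ δ : B →ₐ[k] B[X], IsExpMap k B δ → ¬ IsTrivialExp k B δ → HasSlice k B δ := by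
    intro δ hδ hnt
    obtain ⟨x, hx⟩ := exists_localSlice k B δ hδ (by simpa [IsTrivialExp] using hnt)
    have hxpos := hx.1
    have hne : δ x ≠ 0 := fun h => by
      rw [h, Polynomial.degree_zero] at hxpos
      exact not_lt_bot hxpos
    have hlead := lead_invariant k B δ hδ hne
    have halg := invariant_isAlgebraic k B h1 δ hlead hx.1
    have hco : (δ x).coeff (δ x).natDegree ≠ 0 := Polynomial.leadingCoeff_ne_zero.mpr hne
    exact ⟨x, hx, isUnit_of_algebraic k B hco halg⟩
  constructor
  · apply le_antisymm
    · exact le_iInf₂ fun δ hδ => iInf₂_le δ hδ.1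
    · refine le_iInf₂ fun δ hδ => ?_
      by_cases ht : IsTrivialExp k B δ
      · intro y _
        show δ y = CAlgHom y
        rw [ht y]
        rfl
      · exact iInf₂_le δ ⟨hδ, main δ hδ ht⟩
  · exact main
end
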